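/- Let f be analytic on the closed interior of the ellipse E_ρ for some ρ > 1, and let α_k = (1/π)∫_{−1}^1 (1−t²)^{−1/2} f(t) T_k(t) dt be its Chebyshev–Fourier coefficients. Then |α_k| ≤ (2/ρ^k)·max_{z ∈ E_ρ} |f(z)| for every k ≥ 0. -/

import Mathlib

/-- The closed interior of the ellipse `E_ρ` with foci `±1` and sum of semi-axes `ρ`,
parametrized via the Joukowski map as the image of the closed annulus `1 ≤ |w| ≤ ρ`. -/
def closedEllipseInterior (ρ : ℝ) : Set ℂ :=
  {z : ℂ | ∃ w : ℂ, 1 ≤ ‖w‖ ∧ ‖w‖ ≤ ρ ∧ z = (w + w⁻¹) / 2}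

/-- The ellipse `E_ρ` itself: image of the circle `|w| = ρ` under the Joukowski map. -/
def ellipse (ρ : ℝ) : Set ℂ :=
  {z : ℂ | ∃ w : ℂ, ‖w‖ = ρ ∧ z = (w + w⁻¹) / 2}

/-!
Substituting `t = cos θ` turns `α k` into `π⁻¹ ∫₀^π f (cos θ) cos (k θ) dθ`, and with `w = e^{iθ}`,
so that `cos θ = (w + w⁻¹) / 2`, this is `(2πi)⁻¹ ∮_{|w| = 1} f ((w + w⁻¹) / 2) w^{-k-1} dw`.
The Joukowski map sends the annulus `1 ≤ |w| ≤ ρ` into the region bounded by `E_ρ`, so the integrand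
is holomorphic there and the contour can be moved to `|w| = ρ`, where the trivial estimate gives
`‖α k‖ ≤ ρ^{-k} max_{E_ρ} ‖f‖`.
-/

open Complex Metric Set MeasureTheory intervalIntegral
open scoped Real

noncomputable def joukowski (w : ℂ) : ℂ := (w + w⁻¹) / 2

lemma joukowski_mem_closedEllipseInterior {ρ : ℝ} {w : ℂ} (h1 : 1 ≤ ‖w‖) (hρ : ‖w‖ ≤ ρ) :
    joukowski w ∈ closedEllipseInterior ρ :=
  ⟨w, h1, hρ, rfl⟩

lemma joukowski_exp_mul_I (θ : ℝ) : joukowski (exp (θ * I)) = cos θ := by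
  rw [joukowski, ← exp_neg, cos]
  ring_nf

lemma ofReal_cos_mem_closedEllipseInterior {ρ : ℝ} (hρ : 1 ≤ ρ) (θ : ℝ) :
    (Real.cos θ : ℂ) ∈ closedEllipseInterior ρ := by
  rw [ofReal_cos, ← joukowski_exp_mul_I]
  exact joukowski_mem_closedEllipseInterior (by simp [norm_exp]) (by simpa [norm_exp] using hρ)

lemma ellipse_eq_image_sphere (ρ : ℝ) : ellipse ρ = joukowski '' sphere 0 ρ := by
  ext z
  simp only [ellipse, mem_ofPred_eq, mem_image, mem_sphere_zero_iff_norm, joukowski, eq_comm]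

lemma ellipse_subset_closedEllipseInterior {ρ : ℝ} (hρ : 1 ≤ ρ) :
    ellipse ρ ⊆ closedEllipseInterior ρ := by
  rintro z ⟨w, hw, rfl⟩
  exact joukowski_mem_closedEllipseInterior (hw ▸ hρ) hw.le

lemma differentiableOn_joukowski : DifferentiableOn ℂ joukowski {0}ᶜ := fun _ hw =>
  ((differentiableAt_id.add (differentiableAt_inv hw)).div_const 2).differentiableWithinAt

lemma isCompact_ellipse {ρ : ℝ} (hρ : 0 < ρ) : IsCompact (ellipse ρ) := by
  rw [ellipse_eq_image_sphere]
  refine (isCompact_sphere 0 ρ).image_of_continuousOn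
    (differentiableOn_joukowski.continuousOn.mono fun w hw => ?_)
  rintro rfl
  simp [hρ.ne] at hw

lemma norm_le_sSup_image_norm_ellipse {ρ : ℝ} (hρ : 0 < ρ) {f : ℂ → ℂ}
    (hf : ContinuousOn f (ellipse ρ)) {z : ℂ} (hz : z ∈ ellipse ρ) :
    ‖f z‖ ≤ sSup ((fun z => ‖f z‖) '' ellipse ρ) :=
  le_csSup ((isCompact_ellipse hρ).image_of_continuousOn hf.norm).bddAbove ⟨z, hz, rfl⟩

lemma integral_chebyshevWeight_mul (g : ℝ → ℂ) :
    ∫ t in (-1:ℝ)..1, (((1 - t ^ 2 : ℝ) ^ (-(1 / 2 : ℝ)) : ℝ) : ℂ) * g t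
      = ∫ θ in (0:ℝ)..π, g (Real.cos θ) := by
  have hcos : Real.cos '' Ioo 0 π = Ioo (-1) 1 := Real.cosPartialHomeomorph.image_source_eq_target
  rw [integral_of_le (by norm_num), integral_Ioc_eq_integral_Ioo, ← hcos,
    integral_image_eq_integral_abs_deriv_smul measurableSet_Ioo
      (fun θ _ => (Real.hasDerivAt_cos θ).hasDerivWithinAt)
      (Real.injOn_cos.mono Ioo_subset_Icc_self),
    integral_of_le Real.pi_pos.le, integral_Ioc_eq_integral_Ioo]
  refine setIntegral_congr_fun measurableSet_Ioo fun θ hθ => ?_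
  have hsin : 0 < Real.sin θ := Real.sin_pos_of_pos_of_lt_pi hθ.1 hθ.2
  have hweight : (1 - Real.cos θ ^ 2) ^ (-(1 / 2 : ℝ)) = (Real.sin θ)⁻¹ := by
    rw [← Real.sin_sq, ← Real.rpow_natCast, ← Real.rpow_mul hsin.le]
    norm_num [Real.rpow_neg_one]
  simp only [abs_neg, abs_of_pos hsin, hweight, real_smul, ← mul_assoc, ← ofReal_mul,
    mul_inv_cancel₀ hsin.ne', ofReal_one, one_mul]

lemma integral_zero_two_mul_eq_integral_add_reflect {E : Type*} [NormedAddCommGroup E]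
    [NormedSpace ℝ E] {h : ℝ → E} {c : ℝ} (hh : IntervalIntegrable h volume 0 (2 * c)) :
    ∫ x in (0:ℝ)..2 * c, h x = ∫ x in (0:ℝ)..c, (h x + h (2 * c - x)) := by
  have hc : c ∈ uIcc 0 (2 * c) := by
    rcases le_total 0 c with hc0 | hc0
    · exact mem_uIcc.2 (Or.inl ⟨hc0, by linarith⟩)
    · exact mem_uIcc.2 (Or.inr ⟨by linarith, hc0⟩)
  have hleft : IntervalIntegrable h volume 0 c :=
    hh.mono_set (uIcc_subset_uIcc left_mem_uIcc hc)
  have hright : IntervalIntegrable h volume c (2 * c) :=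
    hh.mono_set (uIcc_subset_uIcc hc right_mem_uIcc)
  have hreflect : ∫ x in (0:ℝ)..c, h (2 * c - x) = ∫ x in c..2 * c, h x := by
    rw [integral_comp_sub_left]; congr 1 <;> ring
  have hright' : IntervalIntegrable (fun x => h (2 * c - x)) volume 0 c := by
    simpa [two_mul] using (hright.comp_sub_left (2 * c)).symm
  rw [integral_add hleft hright', hreflect, integral_add_adjacent_intervals hleft hright]

lemma circleIntegral_joukowski_div_pow_radius_one {f : ℂ → ℂ}
    (hf : Continuous fun θ : ℝ => f (cos θ)) (k : ℕ) :
    ∮ z in C(0, 1), f (joukowski z) / z ^ (k + 1)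
      = 2 * I * ∫ θ in (0:ℝ)..π, f (cos θ) * cos (k * θ) := by
  have hcont : Continuous fun θ : ℝ => I * (f (cos θ) * exp (-(k * θ) * I)) :=
    continuous_const.mul (hf.mul (by fun_prop))
  calc ∮ z in C(0, 1), f (joukowski z) / z ^ (k + 1)
      = ∫ θ in (0:ℝ)..2 * π, I * (f (cos θ) * exp (-(k * θ) * I)) := by
        refine integral_congr fun θ _ => ?_
        have hw : exp (θ * I) ≠ 0 := exp_ne_zero _
        simp only [deriv_circleMap, circleMap_zero, ofReal_one, one_mul, joukowski_exp_mul_I,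
          smul_eq_mul]
        rw [neg_mul, exp_neg, mul_assoc (k : ℂ), exp_nat_mul]
        field_simp
        ring
    _ = ∫ θ in (0:ℝ)..π, I * (f (cos θ) * exp (-(k * θ) * I))
          + I * (f (cos ↑(2 * π - θ)) * exp (-(k * ↑(2 * π - θ)) * I)) :=
        integral_zero_two_mul_eq_integral_add_reflect (hcont.intervalIntegrable _ _)
    -- `θ` and `2π - θ` give the same point `cos θ`, with the factors `e^{∓ikθ}`
    _ = ∫ θ in (0:ℝ)..π, 2 * I * (f (cos θ) * cos (k * θ)) := by
        refine integral_congr fun θ _ => ?_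
        have hperiod : exp (-(k * ↑(2 * π - θ)) * I) = exp (k * θ * I) := by
          rw [show -(k * ↑(2 * π - θ)) * I = k * θ * I + (-k : ℤ) * (2 * π * I) by
              push_cast; ring, exp_add, exp_int_mul_two_pi_mul_I, mul_one]
        rw [hperiod, ofReal_sub, ofReal_mul, ofReal_ofNat, cos_two_pi_sub,
          show 2 * I * (f (cos θ) * cos (k * θ)) = I * f (cos θ) * (2 * cos (k * θ)) by ring,
          two_cos]
        ring
    _ = 2 * I * ∫ θ in (0:ℝ)..π, f (cos θ) * cos (k * θ) := integral_const_mul _ _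

section Annulus

variable {ρ : ℝ} {f : ℂ → ℂ}

lemma differentiableOn_joukowski_div_pow (hf : DifferentiableOn ℂ f (closedEllipseInterior ρ))
    (k : ℕ) :
    DifferentiableOn ℂ (fun z => f (joukowski z) / z ^ (k + 1)) (closedBall 0 ρ \ ball 0 1) := by
  have hne : ∀ z ∈ closedBall (0:ℂ) ρ \ ball 0 1, z ≠ 0 := by
    rintro z ⟨-, hz⟩ rfl
    simp at hz
  refine (hf.comp (differentiableOn_joukowski.mono hne) fun z ⟨hzρ, hz1⟩ => ?_).div
    (differentiableOn_pow _) fun z hz => pow_ne_zero _ (hne z hz)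
  rw [mem_closedBall_zero_iff] at hzρ
  rw [mem_ball_zero_iff, not_lt] at hz1
  exact joukowski_mem_closedEllipseInterior hz1 hzρ

lemma circleIntegral_joukowski_div_pow_eq_radius_one (hρ : 1 ≤ ρ)
    (hf : DifferentiableOn ℂ f (closedEllipseInterior ρ)) (k : ℕ) :
    ∮ z in C(0, ρ), f (joukowski z) / z ^ (k + 1)
      = ∮ z in C(0, 1), f (joukowski z) / z ^ (k + 1) := by
  have hd := differentiableOn_joukowski_div_pow hf k
  refine circleIntegral_eq_of_differentiable_on_annulus_off_countable one_pos hρ countable_empty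
    hd.continuousOn fun z hz => hd.differentiableAt ?_
  rw [sdiff_empty] at hz
  exact Filter.mem_of_superset (isOpen_ball.sdiff isClosed_closedBall |>.mem_nhds hz)
    (sdiff_subset_sdiff ball_subset_closedBall ball_subset_closedBall)

lemma norm_circleIntegral_joukowski_div_pow_le (hρ : 0 < ρ) {M : ℝ}
    (hM : ∀ z ∈ ellipse ρ, ‖f z‖ ≤ M) (k : ℕ) :
    ‖∮ z in C(0, ρ), f (joukowski z) / z ^ (k + 1)‖ ≤ 2 * π * M / ρ ^ k := by
  have hbound : ∀ z ∈ sphere (0:ℂ) ρ, ‖f (joukowski z) / z ^ (k + 1)‖ ≤ M / ρ ^ (k + 1) := by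
    intro z hz
    rw [mem_sphere_zero_iff_norm] at hz
    rw [norm_div, norm_pow, hz]
    gcongr
    exact hM _ ((ellipse_eq_image_sphere ρ).symm ▸ mem_image_of_mem _ (by simpa using hz))
  calc ‖∮ z in C(0, ρ), f (joukowski z) / z ^ (k + 1)‖
      ≤ 2 * π * ρ * (M / ρ ^ (k + 1)) :=
        circleIntegral.norm_integral_le_of_norm_le_const hρ.le hbound
    _ = 2 * π * M / ρ ^ k := by field_simp; ring

end Annulus

lemma chebyshevCoeff_eq_circleIntegral {ρ : ℝ} (hρ : 1 ≤ ρ) {f : ℂ → ℂ}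
    (hf : DifferentiableOn ℂ f (closedEllipseInterior ρ)) (k : ℕ) :
    ∫ t in (-1:ℝ)..1,
        (((1 - t ^ 2 : ℝ) ^ (-(1 / 2 : ℝ)) : ℝ) : ℂ) * f t *
          (Polynomial.Chebyshev.T ℂ k).eval (t : ℂ)
      = (2 * I)⁻¹ * ∮ z in C(0, ρ), f (joukowski z) / z ^ (k + 1) := by
  have hcont : Continuous fun θ : ℝ => f (cos θ) := by
    simp_rw [← ofReal_cos]
    exact hf.continuousOn.comp_continuous (by fun_prop) (ofReal_cos_mem_closedEllipseInterior hρ)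
  simp_rw [mul_assoc, integral_chebyshevWeight_mul, ofReal_cos,
    Polynomial.Chebyshev.T_complex_cos, Int.cast_natCast,
    circleIntegral_joukowski_div_pow_eq_radius_one hρ hf,
    circleIntegral_joukowski_div_pow_radius_one hcont, ← mul_assoc]
  field_simp

theorem stmt_19 (ρ : ℝ) (hρ : 1 < ρ) (f : ℂ → ℂ)
    (hf : DifferentiableOn ℂ f (closedEllipseInterior ρ))
    (α : ℕ → ℂ)
    (hα : ∀ k, α k = (1 / Real.pi : ℝ) *
        ∫ t in (-1:ℝ)..1,
          ((1 - t ^ 2 : ℝ) ^ (-(1 / 2 : ℝ)) : ℝ) * f t * (Polynomial.Chebyshev.T ℂ k).eval (t : ℂ))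
    (k : ℕ) :
    ‖α k‖ ≤ (2 / ρ ^ k) * sSup ((fun z => ‖f z‖) '' ellipse ρ) := by
  set M := sSup ((fun z => ‖f z‖) '' ellipse ρ)
  have hρ0 : 0 < ρ := one_pos.trans hρ
  have hM : ∀ z ∈ ellipse ρ, ‖f z‖ ≤ M := fun z =>
    norm_le_sSup_image_norm_ellipse hρ0
      (hf.continuousOn.mono (ellipse_subset_closedEllipseInterior hρ.le))
  have hα_le : ‖α k‖ ≤ M / ρ ^ k := by
    rw [hα, chebyshevCoeff_eq_circleIntegral hρ.le hf, norm_mul, norm_mul, norm_inv, norm_mul,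
      Complex.norm_real, Complex.norm_two, norm_I, mul_one]
    calc ‖(1 / π : ℝ)‖ * (2⁻¹ * ‖∮ z in C(0, ρ), f (joukowski z) / z ^ (k + 1)‖)
        ≤ ‖(1 / π : ℝ)‖ * (2⁻¹ * (2 * π * M / ρ ^ k)) := by
          gcongr; exact norm_circleIntegral_joukowski_div_pow_le hρ0 hM k
      _ = M / ρ ^ k := by rw [Real.norm_of_nonneg (by positivity)]; field_simp
  calc ‖α k‖ ≤ M / ρ ^ k := hα_le
    _ ≤ 2 * (M / ρ ^ k) := by linarith [(norm_nonneg _).trans hα_le]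
    _ = 2 / ρ ^ k * M := by ring
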